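/- arXiv:q-alg/9607017 — 4 statements merged into one kernel-verified Lean document; each statement's English description precedes it below -/
import Mathlib

section
/- Let T : ℤ² → ℤ² be the linear map T(a,b) = (a+b, a). Then the union over m ≥ 0 of T^{-m}(ℤ₊ × ℤ₊) (preimages under the m-th iterate, equivalently images of the positive quadrant under the inverse iterates) equals { (a,b) ∈ ℤ² : φ·a + b ≥ 0 } where φ = (1+√5)/2. -/
/-!
For a root `r` of `r ^ 2 = r + 1`, the linear form `ℓ_r (a, b) = r a + b` (`fibForm r`) satisfies
`ℓ_r ∘ T = r • ℓ_r`, so `ℓ_φ (Tᵐ p) = φᵐ ℓ_φ p` and the half-plane `ℓ_φ ≥ 0` contains every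
`T⁻ᵐ` of the quadrant. Conversely `√5 (Tᵐ p).1 = φᵐ ℓ_φ p - ψᵐ ℓ_ψ p` tends to `+∞` when
`ℓ_φ p > 0`, because `|ψ| < 1`; since `(Tᵐ⁺¹ p).2 = (Tᵐ p).1`, both coordinates are eventually
nonnegative. On the boundary line `ℓ_φ p = 0` the irrationality of `φ` forces `p = 0`.
-/

open Real goldenRatio Filter Function

theorem Irrational.eq_zero_of_mul_add_eq_zero {x : ℝ} (hx : Irrational x) {a b : ℤ}
    (h : x * a + b = 0) : a = 0 ∧ b = 0 := by
  obtain rfl : a = 0 := by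
    by_contra ha
    exact ((hx.mul_intCast ha).add_intCast b).ne_zero h
  exact ⟨rfl, by simpa using h⟩

def fibMap : ℤ × ℤ → ℤ × ℤ := fun p => (p.1 + p.2, p.1)

noncomputable def fibForm (r : ℝ) (p : ℤ × ℤ) : ℝ := r * p.1 + p.2

theorem semiconj_fibForm_fibMap {r : ℝ} (hr : r ^ 2 = r + 1) :
    Semiconj (fibForm r) fibMap (r * ·) := fun p => by
  simp only [fibForm, fibMap]
  push_cast
  linear_combination -(p.1 : ℝ) * hr

theorem fibForm_iterate_fibMap {r : ℝ} (hr : r ^ 2 = r + 1) (m : ℕ) (p : ℤ × ℤ) :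
    fibForm r (fibMap^[m] p) = r ^ m * fibForm r p := by
  rw [(semiconj_fibForm_fibMap hr).iterate_right m p, mul_left_iterate_apply]

theorem snd_iterate_succ_fibMap (m : ℕ) (p : ℤ × ℤ) :
    (fibMap^[m + 1] p).2 = (fibMap^[m] p).1 := by
  rw [iterate_succ_apply']
  rfl

theorem fibForm_goldenRatio_nonneg_of_nonneg {p : ℤ × ℤ} (h1 : 0 ≤ p.1) (h2 : 0 ≤ p.2) :
    0 ≤ fibForm φ p := by
  have := goldenRatio_pos
  unfold fibForm
  positivity

theorem sqrt_five_mul_fst_eq_fibForm_sub (p : ℤ × ℤ) :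
    √5 * p.1 = fibForm φ p - fibForm ψ p := by
  rw [← goldenRatio_sub_goldenConj, fibForm, fibForm]
  ring

theorem tendsto_fst_iterate_fibMap {p : ℤ × ℤ} (hp : 0 < fibForm φ p) :
    Tendsto (fun m => ((fibMap^[m] p).1 : ℝ)) atTop atTop := by
  have hψ : |ψ| < 1 := abs_lt.2 ⟨neg_one_lt_goldenConj, goldenConj_neg.trans one_pos⟩
  have hmain : Tendsto (fun m : ℕ => φ ^ m * fibForm φ p - ψ ^ m * fibForm ψ p) atTop atTop := by
    simpa only [sub_eq_add_neg, zero_mul, neg_zero] using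
      ((tendsto_pow_atTop_atTop_of_one_lt one_lt_goldenRatio).atTop_mul_const hp).atTop_add
        ((tendsto_pow_atTop_nhds_zero_of_abs_lt_one hψ).mul_const (fibForm ψ p)).neg
  refine (hmain.atTop_div_const (by positivity : (0 : ℝ) < √5)).congr fun m => ?_
  rw [← fibForm_iterate_fibMap goldenRatio_sq, ← fibForm_iterate_fibMap goldenConj_sq,
    ← sqrt_five_mul_fst_eq_fibForm_sub, mul_div_cancel_left₀ _ (by positivity)]

theorem penrose_positive_cone_limit :
    (⋃ m : ℕ,
        (fun p : ℤ × ℤ => (p.1 + p.2, p.1))^[m] ⁻¹'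
          {p : ℤ × ℤ | 0 ≤ p.1 ∧ 0 ≤ p.2}) =
      {p : ℤ × ℤ | 0 ≤ (1 + Real.sqrt 5) / 2 * (p.1 : ℝ) + (p.2 : ℝ)} := by
  change (⋃ m : ℕ, fibMap^[m] ⁻¹' _) = {p | 0 ≤ fibForm φ p}
  ext p
  simp only [Set.mem_iUnion, Set.mem_preimage, Set.mem_ofPred_eq]
  constructor
  · rintro ⟨m, h1, h2⟩
    have hm := fibForm_goldenRatio_nonneg_of_nonneg h1 h2
    rw [fibForm_iterate_fibMap goldenRatio_sq] at hm
    exact nonneg_of_mul_nonneg_right hm (pow_pos goldenRatio_pos m)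
  · intro hp
    rcases hp.eq_or_lt with hzero | hpos
    · obtain ⟨h1, h2⟩ := goldenRatio_irrational.eq_zero_of_mul_add_eq_zero hzero.symm
      exact ⟨0, by simp [h1, h2]⟩
    · obtain ⟨N, hN⟩ :=
        eventually_atTop.1 ((tendsto_fst_iterate_fibMap hpos).eventually_ge_atTop 0)
      refine ⟨N + 1, ?_, ?_⟩
      · exact_mod_cast hN (N + 1) N.le_succ
      · rw [snd_iterate_succ_fibMap]
        exact_mod_cast hN N le_rfl
end

section
/- With T = !![1,0,0;1,1,1;0,0,1] acting on ℤ³, the union over m ∈ ℕ of T^{-m}(ℤ₊³) equals the set of (a,b,c) ∈ ℤ³ with a ≥ 0, c ≥ 0, and additionally b ≥ 0 in case a = 0 and c = 0 (b arbitrary otherwise). This is the positive cone K₀₊ of the algebra A(∨). -/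
private def Nmat : Matrix (Fin 3) (Fin 3) ℤ := !![1, 0, 0; -1, 1, -1; 0, 0, 1]

private lemma inv_eq_N :
    (!![1, 0, 0; 1, 1, 1; 0, 0, 1] : Matrix (Fin 3) (Fin 3) ℤ)⁻¹ = Nmat := by
  apply Matrix.inv_eq_right_inv
  simp [Nmat, Matrix.mul_fin_three, Matrix.one_fin_three]

private lemma Npow_mulVec (m : ℕ) (v : Fin 3 → ℤ) :
    (Nmat ^ m).mulVec v = ![v 0, v 1 - m * (v 0 + v 2), v 2] := by
  induction m with
  | zero =>
      funext i
      fin_cases i <;> simp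
  | succ m ih =>
      rw [pow_succ', ← Matrix.mulVec_mulVec, ih]
      funext i
      fin_cases i <;>
        simp [Nmat, Matrix.mulVec, dotProduct, Fin.sum_univ_succ] <;> ring

theorem vee_positive_cone :
    (⋃ m : ℕ,
        (fun v : Fin 3 → ℤ =>
            ((!![1, 0, 0; 1, 1, 1; 0, 0, 1] : Matrix (Fin 3) (Fin 3) ℤ)⁻¹ ^ m).mulVec v) ''
          {v : Fin 3 → ℤ | ∀ i, 0 ≤ v i}) =
      {v : Fin 3 → ℤ | 0 ≤ v 0 ∧ 0 ≤ v 2 ∧ (v 0 = 0 ∧ v 2 = 0 → 0 ≤ v 1)} := by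
  rw [inv_eq_N]
  ext v
  simp only [Set.mem_iUnion, Set.mem_image, Set.mem_setOf_eq]
  constructor
  · rintro ⟨m, w, hw, rfl⟩
    rw [Npow_mulVec]
    refine ⟨by simpa using hw 0, by simpa using hw 2, ?_⟩
    rintro ⟨h0, h2⟩
    simp only [Matrix.cons_val_zero, Matrix.cons_val_one, Matrix.head_cons,
      Matrix.cons_val_two, Matrix.tail_cons] at h0 h2 ⊢
    have : w 0 = 0 := by simpa using h0
    have h2' : w 2 = 0 := by simpa using h2
    simp [this, h2']
    exact hw 1
  · rintro ⟨h0, h2, hb⟩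
    by_cases h : v 0 = 0 ∧ v 2 = 0
    · refine ⟨0, v, ?_, ?_⟩
      · intro i
        fin_cases i
        · exact h0
        · exact hb h
        · exact h2
      · rw [Npow_mulVec]
        funext i
        fin_cases i <;> simp
    · refine ⟨(v 1).natAbs, ![v 0, v 1 + (v 1).natAbs * (v 0 + v 2), v 2], ?_, ?_⟩
      · have hs : 1 ≤ v 0 + v 2 := by
          rcases (not_and_or.mp h) with h' | h' <;> omega
        intro i
        fin_cases i
        · exact h0
        · show (0:ℤ) ≤ v 1 + (v 1).natAbs * (v 0 + v 2)
          nlinarith [Int.natCast_nonneg (v 1).natAbs, Int.le_natAbs (a := v 1),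
            Int.natCast_natAbs (v 1), abs_nonneg (v 1), neg_abs_le (v 1)]
        · exact h2
      · rw [Npow_mulVec]
        funext i
        fin_cases i <;> simp <;> ring
end

section
/- With T = !![1,0,0,0;1,1,0,1;0,0,1,1;0,0,0,1] on ℤ⁴, the union over m ∈ ℕ of T^{-m}(ℤ₊⁴) equals {(a,b,c,d) ∈ ℤ⁴ : a ≥ 0, d ≥ 0, (d = 0 → c ≥ 0), (a = 0 ∧ d = 0 → b ≥ 0)}. -/
def B : Matrix (Fin 4) (Fin 4) ℤ := !![1, 0, 0, 0; -1, 1, 0, -1; 0, 0, 1, -1; 0, 0, 0, 1]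

lemma Ainv : (!![1, 0, 0, 0; 1, 1, 0, 1; 0, 0, 1, 1; 0, 0, 0, 1] :
    Matrix (Fin 4) (Fin 4) ℤ)⁻¹ = B := Matrix.inv_eq_right_inv (by decide)

lemma key (m : ℕ) (v : Fin 4 → ℤ) :
    (B ^ m).mulVec v = ![v 0, v 1 - m * (v 0 + v 3), v 2 - m * v 3, v 3] := by
  induction m generalizing v with
  | zero => funext i; fin_cases i <;> simp
  | succ n ih =>
    rw [pow_succ, ← Matrix.mulVec_mulVec, ih]
    funext i
    fin_cases i <;>
      simp [Matrix.mulVec, dotProduct, Fin.sum_univ_four, B] <;> ring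

theorem pin_positive_cone :
    (⋃ m : ℕ,
        (fun v : Fin 4 → ℤ =>
            ((!![1, 0, 0, 0; 1, 1, 0, 1; 0, 0, 1, 1; 0, 0, 0, 1] :
                Matrix (Fin 4) (Fin 4) ℤ)⁻¹ ^ m).mulVec v) ''
          {v : Fin 4 → ℤ | ∀ i, 0 ≤ v i}) =
      {v : Fin 4 → ℤ | 0 ≤ v 0 ∧ 0 ≤ v 3 ∧ (v 3 = 0 → 0 ≤ v 2) ∧
        (v 0 = 0 ∧ v 3 = 0 → 0 ≤ v 1)} := by
  ext x
  simp only [Ainv, Set.mem_iUnion, Set.mem_image, Set.mem_setOf_eq]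
  constructor
  · rintro ⟨m, v, hv, rfl⟩
    simp only [key, Matrix.cons_val_zero, Matrix.cons_val_one, Matrix.head_cons,
      Matrix.cons_val_two, Matrix.tail_cons, Matrix.cons_val_three]
    refine ⟨hv 0, hv 3, ?_, ?_⟩
    · intro h3
      simp only [h3, mul_zero, sub_zero]
      exact hv 2
    · rintro ⟨h0, h3⟩
      simp only [h0, h3, add_zero, mul_zero, sub_zero]
      exact hv 1
  · rintro ⟨h0, h3, h2, h1⟩
    set M : ℤ := max (-(x 1)) (max (-(x 2)) 0) with hMdef
    have hM0 : 0 ≤ M := le_max_of_le_right (le_max_right _ _)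
    have hM1 : -(x 1) ≤ M := le_max_left _ _
    have hM2 : -(x 2) ≤ M := le_max_of_le_right (le_max_left _ _)
    have hcast : (M.toNat : ℤ) = M := Int.toNat_of_nonneg hM0
    have e2 : 0 ≤ x 2 + M * x 3 := by
      rcases eq_or_lt_of_le h3 with h | h
      · have := h2 h.symm; nlinarith
      · nlinarith [mul_nonneg hM0 (by linarith : (0:ℤ) ≤ x 3 - 1)]
    have e1 : 0 ≤ x 1 + M * (x 0 + x 3) := by
      rcases eq_or_lt_of_le (add_nonneg h0 h3) with h | h
      · have hx0 : x 0 = 0 := by linarith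
        have hx3 : x 3 = 0 := by linarith
        have := h1 ⟨hx0, hx3⟩; nlinarith
      · nlinarith [mul_nonneg hM0 (by linarith : (0:ℤ) ≤ x 0 + x 3 - 1)]
    refine ⟨M.toNat, ![x 0, x 1 + M * (x 0 + x 3), x 2 + M * x 3, x 3], ?_, ?_⟩
    · intro i; fin_cases i <;> simpa using by assumption
    · rw [key]
      funext i
      fin_cases i <;> simp [hcast] <;> ring
end

section
/- With T the circle-poset matrix !![1,0,0,0;1,1,0,1;1,0,1,1;0,0,0,1] on ℤ⁴, the union over m ∈ ℕ of T^{-m}(ℤ₊⁴) equals {(a,b,c,d) ∈ ℤ⁴ : a ≥ 0, d ≥ 0, (a = 0 ∧ d = 0 → b ≥ 0 ∧ c ≥ 0)}. -/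
private def Tmat : Matrix (Fin 4) (Fin 4) ℤ :=
  !![1, 0, 0, 0; 1, 1, 0, 1; 1, 0, 1, 1; 0, 0, 0, 1]

private def Mmat : Matrix (Fin 4) (Fin 4) ℤ :=
  !![1, 0, 0, 0; -1, 1, 0, -1; -1, 0, 1, -1; 0, 0, 0, 1]

private lemma Tinv : Tmat⁻¹ = Mmat := by
  apply Matrix.inv_eq_right_inv
  ext i j
  fin_cases i <;> fin_cases j <;>
    simp [Tmat, Mmat, Matrix.mul_apply, Fin.sum_univ_four, Matrix.one_apply, Matrix.vecHead, Matrix.vecTail]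

private lemma pow_formula (m : ℕ) (v : Fin 4 → ℤ) :
    (Mmat ^ m).mulVec v =
      ![v 0, v 1 - m * (v 0 + v 3), v 2 - m * (v 0 + v 3), v 3] := by
  induction m with
  | zero =>
    funext i
    fin_cases i <;> simp
  | succ m ih =>
    rw [pow_succ', ← Matrix.mulVec_mulVec, ih]
    funext i
    fin_cases i <;>
      simp [Mmat, Matrix.mulVec, dotProduct, Fin.sum_univ_four] <;> ring

theorem circle_positive_cone :
    (⋃ m : ℕ,
        (fun v : Fin 4 → ℤ =>
            ((!![1, 0, 0, 0; 1, 1, 0, 1; 1, 0, 1, 1; 0, 0, 0, 1] :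
                Matrix (Fin 4) (Fin 4) ℤ)⁻¹ ^ m).mulVec v) ''
          {v : Fin 4 → ℤ | ∀ i, 0 ≤ v i}) =
      {v : Fin 4 → ℤ | 0 ≤ v 0 ∧ 0 ≤ v 3 ∧
        (v 0 = 0 ∧ v 3 = 0 → 0 ≤ v 1 ∧ 0 ≤ v 2)} := by
  have hT : (!![1, 0, 0, 0; 1, 1, 0, 1; 1, 0, 1, 1; 0, 0, 0, 1] :
      Matrix (Fin 4) (Fin 4) ℤ) = Tmat := rfl
  ext w
  simp only [Set.mem_iUnion, Set.mem_image, Set.mem_setOf_eq, hT, Tinv]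
  constructor
  · rintro ⟨m, v, hv, rfl⟩
    rw [pow_formula]
    refine ⟨hv 0, hv 3, ?_⟩
    rintro ⟨h0, h3⟩
    have hv0 : v 0 = 0 := h0
    have hv3 : v 3 = 0 := h3
    show (0:ℤ) ≤ v 1 - m * (v 0 + v 3) ∧ (0:ℤ) ≤ v 2 - m * (v 0 + v 3)
    rw [hv0, hv3]
    simpa using ⟨hv 1, hv 2⟩
  · rintro ⟨h0, h3, hcond⟩
    by_cases hzero : w 0 + w 3 = 0
    · have hw0 : w 0 = 0 := by omega
      have hw3 : w 3 = 0 := by omega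
      obtain ⟨h1, h2⟩ := hcond ⟨hw0, hw3⟩
      refine ⟨0, w, ?_, ?_⟩
      · intro i; fin_cases i <;> assumption
      · rw [pow_formula]
        funext i; fin_cases i <;> simp
    · have hpos : 1 ≤ w 0 + w 3 := by omega
      set m : ℕ := (max (-(w 1)) (-(w 2))).toNat with hm
      have hm1 : -(w 1) ≤ (m : ℤ) := by
        rw [hm]; exact le_trans (le_max_left _ _) (Int.self_le_toNat _)
      have hm2 : -(w 2) ≤ (m : ℤ) := by
        rw [hm]; exact le_trans (le_max_right _ _) (Int.self_le_toNat _)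
      have key : (m : ℤ) ≤ m * (w 0 + w 3) := by nlinarith
      refine ⟨m, ![w 0, w 1 + m * (w 0 + w 3), w 2 + m * (w 0 + w 3), w 3], ?_, ?_⟩
      · intro i; fin_cases i <;> simp <;> nlinarith
      · rw [pow_formula]
        funext i; fin_cases i <;> simp <;> ring
end
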